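/- For every real number α and all vectors p, d ∈ ℝ⁴, the standard inner product of exp(−α•B)·p with exp((π/2 − α)•B)·d equals the standard inner product of p with B·d. Consequently, a point p lies on the plane B·d if and only if the transformed point exp(−α•B)·p lies on the plane whose coordinate vector is exp((π/2 − α)•B)·d, i.e. the canonical duality (represented by the identity matrix) maps the points of the transformed polyhedron to the planes of the transformed dual. -/

import Mathlib

open Matrix

/-- The null-polarity matrix used in Cremona's method. -/
def Bmat : Matrix (Fin 4) (Fin 4) ℝ :=
  !![0, -1, 0, 0;
     1,  0, 0, 0;
     0,  0, 0, -1;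
     0,  0, 1, 0]

/-!
Since `B * B = -1`, the map `ℂ → M₄(ℝ)`, `i ↦ B`, is a continuous algebra homomorphism, so
`exp (t • B) = cos t • 1 + sin t • B`; in particular `exp ((π/2) • B) = B`. Since `B` is also
skew, `exp (-α • B)ᵀ = exp (α • B)`, hence `exp (-α • B)ᵀ * exp ((π/2 - α) • B) = B`.
-/

section
variable {A : Type*} [NormedRing A] [NormedAlgebra ℝ A] [Algebra ℚ A]

theorem exp_smul_of_mul_self_eq_neg_one {J : A} (hJ : J * J = -1) (t : ℝ) :
    NormedSpace.exp (t • J) = algebraMap ℝ A (Real.cos t) + Real.sin t • J := by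
  let f : ℂ →ₐ[ℝ] A := Complex.lift ⟨J, hJ⟩
  have hf : Continuous f := LinearMap.continuous_of_finiteDimensional f.toLinearMap
  have hfJ : f (t * Complex.I) = t • J := by simp [f]
  rw [← hfJ, ← NormedSpace.map_exp f hf, ← Complex.exp_eq_exp_ℂ, Complex.exp_ofReal_mul_I]
  simp [f, Complex.cos_ofReal_re, Complex.sin_ofReal_re]

theorem exp_pi_div_two_smul_of_mul_self_eq_neg_one {J : A} (hJ : J * J = -1) :
    NormedSpace.exp ((Real.pi / 2) • J) = J := by
  simp [exp_smul_of_mul_self_eq_neg_one hJ]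

end

theorem Matrix.mulVec_dotProduct_mulVec {m n k R : Type*} [Fintype m] [Fintype n] [Fintype k]
    [CommSemiring R] (A : Matrix m n R) (C : Matrix m k R) (p : n → R) (d : k → R) :
    (A *ᵥ p) ⬝ᵥ (C *ᵥ d) = p ⬝ᵥ ((Aᵀ * C) *ᵥ d) := by
  rw [← mulVec_mulVec, dotProduct_mulVec p, vecMul_transpose]

-- The matrix exponential does not depend on a norm; one is chosen only to apply the lemma above.
attribute [local instance] Matrix.linftyOpNormedRing Matrix.linftyOpNormedAlgebra in
theorem Matrix.transpose_exp_neg_smul_mul_exp_pi_div_two_sub_smul {n : Type*} [Fintype n]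
    [DecidableEq n] {J : Matrix n n ℝ} (hJt : Jᵀ = -J) (hJ : J * J = -1) (α : ℝ) :
    (NormedSpace.exp ((-α) • J))ᵀ * NormedSpace.exp ((Real.pi / 2 - α) • J) = J := by
  have hα : ((-α) • J)ᵀ = α • J := by rw [transpose_smul, hJt, smul_neg, neg_smul, neg_neg]
  rw [← exp_transpose, hα, ← exp_add_of_commute _ _ ((Commute.refl J).smul_left _ |>.smul_right _),
    ← add_smul, add_sub_cancel]
  exact exp_pi_div_two_smul_of_mul_self_eq_neg_one hJ

theorem Bmat_transpose : Bmatᵀ = -Bmat := by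
  ext i j; fin_cases i <;> fin_cases j <;> simp [Bmat]

theorem Bmat_mul_self : Bmat * Bmat = -1 := by
  ext i j; fin_cases i <;> fin_cases j <;> simp [Bmat, mul_apply, Fin.sum_univ_four, one_apply]

/-- For every real `α` and all `p, d ∈ ℝ⁴`, the standard inner product of
`exp (-α • B) * p` with `exp ((π/2 - α) • B) * d` equals that of `p` with `B * d`.
Consequently `p` is incident with the plane `B * d` iff the transformed point
`exp (-α • B) * p` is incident with the plane `exp ((π/2 - α) • B) * d`. -/
theorem exp_smul_Bmat_incidence (α : ℝ) (p d : Fin 4 → ℝ) :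
    (NormedSpace.exp ((-α) • Bmat) *ᵥ p) ⬝ᵥ
        (NormedSpace.exp ((Real.pi / 2 - α) • Bmat) *ᵥ d) = p ⬝ᵥ (Bmat *ᵥ d) ∧
      (p ⬝ᵥ (Bmat *ᵥ d) = 0 ↔
        (NormedSpace.exp ((-α) • Bmat) *ᵥ p) ⬝ᵥ
          (NormedSpace.exp ((Real.pi / 2 - α) • Bmat) *ᵥ d) = 0) := by
  have h : (NormedSpace.exp ((-α) • Bmat) *ᵥ p) ⬝ᵥ
      (NormedSpace.exp ((Real.pi / 2 - α) • Bmat) *ᵥ d) = p ⬝ᵥ (Bmat *ᵥ d) := by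
    rw [mulVec_dotProduct_mulVec,
      transpose_exp_neg_smul_mul_exp_pi_div_two_sub_smul Bmat_transpose Bmat_mul_self]
  exact ⟨h, by rw [h]⟩
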